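/- Let G be an abelian group such that the intersection of any two nontrivial subgroups of G is infinite (in particular, G is nontrivial). Then G is isomorphic to a subgroup of the additive group ℚ of rational numbers. -/

import Mathlib

/-!
Taking `H = K = ⟨g⟩` shows that every nonzero element has infinite order, and taking
`H = ⟨a⟩`, `K = ⟨b⟩` that any two nonzero elements have a common nonzero multiple: `G` is
torsion-free of rank one. A torsion-free group embeds in its divisible hull, a `ℚ`-vector space,
and rank one means that this space is spanned by any nonzero element of `G`, so it is `ℚ`.
-/

open AddSubgroup

lemma isAddTorsionFree_of_infinite_zmultiples {G : Type*} [AddCommGroup G]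
    (h : ∀ g : G, g ≠ 0 → Infinite (zmultiples g)) : IsAddTorsionFree G :=
  IsAddTorsionFree.of_not_isOfFinAddOrder fun g hg hfin =>
    not_finite_iff_infinite.2 (h g hg) hfin.finite_zmultiples

lemma exists_zsmul_eq_zsmul_of_inf_zmultiples_ne_bot {G : Type*} [AddCommGroup G] {a b : G}
    (h : zmultiples a ⊓ zmultiples b ≠ ⊥) : ∃ m : ℤ, m ≠ 0 ∧ ∃ n : ℤ, m • a = n • b := by
  obtain ⟨⟨_, ⟨m, rfl⟩, n, hn⟩, hx⟩ := ne_bot_iff_exists_ne_zero.1 h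
  exact ⟨m, by rintro rfl; simp at hx, n, hn.symm⟩

namespace DivisibleHull

variable {M : Type*} [AddCommGroup M]

lemma nsmul_mk_self (m : M) (s : ℕ+) : (s : ℕ) • mk m s = m := by
  rw [nsmul_mk, mk_eq_mk]
  exact ⟨1, by simp⟩

lemma span_coe_eq_top {b : M} (h : ∀ a : M, ∃ m : ℤ, m ≠ 0 ∧ ∃ n : ℤ, m • a = n • b) :
    Submodule.span ℚ {(b : DivisibleHull M)} = ⊤ := by
  refine eq_top_iff.2 fun x _ => ?_
  induction x with | mk a s
  obtain ⟨m, hm, n, hmn⟩ := h a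
  have hms : (m : ℚ) * s ≠ 0 := by positivity
  have key : ((m : ℚ) * s) • mk a s = (n : ℚ) • (b : DivisibleHull M) := by
    rw [mul_smul, Nat.cast_smul_eq_nsmul, nsmul_mk_self, Int.cast_smul_eq_zsmul,
      Int.cast_smul_eq_zsmul, zsmul_mk, zsmul_mk, hmn]
  rw [← Submodule.smul_mem_iff _ hms, key]
  exact Submodule.smul_mem _ _ (Submodule.mem_span_singleton_self _)

end DivisibleHull

theorem exists_injective_addMonoidHom_rat_of_forall_zsmul_eq_zsmul {M : Type*} [AddCommGroup M]
    [IsAddTorsionFree M] {b : M} (hb : b ≠ 0)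
    (h : ∀ a : M, ∃ m : ℤ, m ≠ 0 ∧ ∃ n : ℤ, m • a = n • b) :
    ∃ f : M →+ ℚ, Function.Injective f := by
  have hb' : (b : DivisibleHull M) ≠ 0 := by
    simpa using DivisibleHull.coe_injective.ne hb
  let e : DivisibleHull M ≃ₗ[ℚ] ℚ :=
    (LinearEquiv.ofTop _ (DivisibleHull.span_coe_eq_top h)).symm.trans
      (LinearEquiv.toSpanNonzeroSingleton ℚ _ _ hb').symm
  exact ⟨(e : DivisibleHull M →+ ℚ).comp (DivisibleHull.coeAddMonoidHom M),
    e.injective.comp DivisibleHull.coe_injective⟩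

theorem abelian_with_infinite_intersections_embeds_in_rat
    (G : Type) [AddCommGroup G] [Nontrivial G]
    (h : ∀ H K : AddSubgroup G, H ≠ ⊥ → K ≠ ⊥ → Infinite ↥(H ⊓ K)) :
    ∃ H : AddSubgroup ℚ, Nonempty (G ≃+ ↥H) := by
  have hinf (a b : G) (ha : a ≠ 0) (hb : b ≠ 0) : Infinite ↥(zmultiples a ⊓ zmultiples b) :=
    h _ _ (zmultiples_ne_bot.2 ha) (zmultiples_ne_bot.2 hb)
  have : IsAddTorsionFree G :=
    isAddTorsionFree_of_infinite_zmultiples fun g hg => by simpa using hinf g g hg hg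
  obtain ⟨b, hb⟩ := exists_ne (0 : G)
  have hrel (a : G) : ∃ m : ℤ, m ≠ 0 ∧ ∃ n : ℤ, m • a = n • b := by
    rcases eq_or_ne a 0 with rfl | ha
    · exact ⟨1, one_ne_zero, 0, by simp⟩
    · have := hinf a b ha hb
      exact exists_zsmul_eq_zsmul_of_inf_zmultiples_ne_bot <|
        (nontrivial_iff_ne_bot _).1 inferInstance
  obtain ⟨f, hf⟩ := exists_injective_addMonoidHom_rat_of_forall_zsmul_eq_zsmul hb hrel
  exact ⟨f.range, ⟨AddMonoidHom.ofInjective hf⟩⟩
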